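/- arXiv:0803.3632 — 4 statements merged into one kernel-verified Lean document; each statement's English description precedes it below -/
import Mathlib

section
/- If two line segments [u,v] and [w,x] in the Euclidean plane intersect, each of length at most 1, and both |u,x| > 1 and |v,x| > 1, then |u,w| ≤ 1 and |v,w| ≤ 1. -/
theorem dist_lt_of_dist_add_dist_le {α : Type*} [PseudoMetricSpace α] {u v w x p : α} {r : ℝ}
    (huv : dist u p + dist p v ≤ r) (hwx : dist w p + dist p x ≤ r) (hvx : r < dist v x) :
    dist u w < r := by
  have hup : dist u p < dist p x := by
    linarith [dist_triangle v p x, dist_comm v p]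
  calc dist u w ≤ dist u p + dist p w := dist_triangle u p w
    _ < dist p x + dist w p := by rw [dist_comm p w]; gcongr
    _ ≤ r := by linarith

theorem stmt_1 (u v w x : EuclideanSpace ℝ (Fin 2))
    (huv : dist u v ≤ 1) (hwx : dist w x ≤ 1)
    (hint : (segment ℝ u v ∩ segment ℝ w x).Nonempty)
    (hux : 1 < dist u x) (hvx : 1 < dist v x) :
    dist u w ≤ 1 ∧ dist v w ≤ 1 := by
  obtain ⟨p, hpuv, hpwx⟩ := hint
  have hu : dist u p + dist p v ≤ 1 := (dist_add_dist_of_mem_segment hpuv).trans_le huv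
  have hv : dist v p + dist p u ≤ 1 := by rwa [add_comm, dist_comm v, dist_comm p u]
  have hw : dist w p + dist p x ≤ 1 := (dist_add_dist_of_mem_segment hpwx).trans_le hwx
  exact ⟨(dist_lt_of_dist_add_dist_le hu hw hvx).le, (dist_lt_of_dist_add_dist_le hv hw hux).le⟩
end

section
/- If two line segments [u,v] and [w,x] in the Euclidean plane intersect and each has length at most 1, then min(|u,x|, |v,x|) ≤ 2/√3. -/
/-! If the segments cross at `p = a • u + b • v` with `a + b = 1`, Stewart's theorem reads
`a |ux|² + b |vx|² = |px|² + a b |uv|²`. The left side is at least `min (|ux|, |vx|)²`, while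
`|px| ≤ |wx| ≤ 1` because `p` lies on `[w, x]`, and `a b ≤ 1/4`; hence the minimum squared is at
most `5/4 < 4/3`. -/

section InnerProductSpace

variable {E : Type*} [NormedAddCommGroup E] [InnerProductSpace ℝ E]

theorem mul_norm_sq_add_mul_norm_sq_of_add_eq_one {a b : ℝ} (hab : a + b = 1) (y z : E) :
    a * ‖y‖ ^ 2 + b * ‖z‖ ^ 2 = ‖a • y + b • z‖ ^ 2 + a * b * ‖y - z‖ ^ 2 := by
  rw [norm_add_sq_real, norm_sub_sq_real, norm_smul, norm_smul, real_inner_smul_left,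
    real_inner_smul_right, Real.norm_eq_abs, Real.norm_eq_abs, mul_pow, mul_pow, sq_abs, sq_abs]
  linear_combination -(a * ‖y‖ ^ 2 + b * ‖z‖ ^ 2) * hab

theorem mul_norm_sub_sq_add_mul_norm_sub_sq_of_add_eq_one {a b : ℝ} (hab : a + b = 1)
    (u v x : E) :
    a * ‖u - x‖ ^ 2 + b * ‖v - x‖ ^ 2 = ‖a • u + b • v - x‖ ^ 2 + a * b * ‖u - v‖ ^ 2 := by
  have hsplit : a • u + b • v - x = a • (u - x) + b • (v - x) := by
    conv_lhs => rw [← one_smul ℝ x, ← hab]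
    module
  rw [hsplit, mul_norm_sq_add_mul_norm_sq_of_add_eq_one hab, sub_sub_sub_cancel_right]

theorem min_dist_sq_le_of_segment_inter_nonempty {u v w x : E}
    (h : (segment ℝ u v ∩ segment ℝ w x).Nonempty) :
    min (dist u x) (dist v x) ^ 2 ≤ dist w x ^ 2 + dist u v ^ 2 / 4 := by
  obtain ⟨p, ⟨a, b, ha, hb, hab, rfl⟩, hpwx⟩ := h
  have hpx : dist (a • u + b • v) x ≤ dist w x := by
    rw [← dist_add_dist_of_mem_segment hpwx]
    exact le_add_of_nonneg_left dist_nonneg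
  have hab4 : a * b ≤ 1 / 4 := by nlinarith [sq_nonneg (a - b)]
  calc min (dist u x) (dist v x) ^ 2
      = a * min (dist u x) (dist v x) ^ 2 + b * min (dist u x) (dist v x) ^ 2 := by
        rw [← add_mul, hab, one_mul]
    _ ≤ a * dist u x ^ 2 + b * dist v x ^ 2 := by
        gcongr
        exacts [min_le_left _ _, min_le_right _ _]
    _ = dist (a • u + b • v) x ^ 2 + a * b * dist u v ^ 2 := by
        simp only [dist_eq_norm]
        exact mul_norm_sub_sq_add_mul_norm_sub_sq_of_add_eq_one hab u v x
    _ ≤ dist w x ^ 2 + 1 / 4 * dist u v ^ 2 := by gcongr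
    _ = dist w x ^ 2 + dist u v ^ 2 / 4 := by ring

end InnerProductSpace

theorem stmt_2 (u v w x : EuclideanSpace ℝ (Fin 2))
    (huv : dist u v ≤ 1) (hwx : dist w x ≤ 1)
    (hint : (segment ℝ u v ∩ segment ℝ w x).Nonempty) :
    min (dist u x) (dist v x) ≤ 2 / Real.sqrt 3 := by
  have hsq : min (dist u x) (dist v x) ^ 2 ≤ (2 / Real.sqrt 3) ^ 2 := by
    rw [div_pow, Real.sq_sqrt zero_le_three]
    calc min (dist u x) (dist v x) ^ 2 ≤ dist w x ^ 2 + dist u v ^ 2 / 4 :=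
          min_dist_sq_le_of_segment_inter_nonempty hint
      _ ≤ 1 ^ 2 + 1 ^ 2 / 4 := by gcongr
      _ ≤ 2 ^ 2 / 3 := by norm_num
  exact (pow_le_pow_iff_left₀ (le_min dist_nonneg dist_nonneg) (by positivity)
    two_ne_zero).1 hsq
end

section
/- Let G be a unit-disk graph and define N(u) to contain every edge (w,x) of G such that |u,w| ≤ 1 and |u,x| ≤ 2/√3 (together with the edges (u,w) for such w). Then the resulting neighborhood relation is 2-intersection semi-closed. -/
/-- Edge relation of the unit-disk graph on vertex set `V`. -/
def UnitDiskEdge (V : Set (EuclideanSpace ℝ (Fin 2)))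
    (a b : EuclideanSpace ℝ (Fin 2)) : Prop :=
  a ∈ V ∧ b ∈ V ∧ a ≠ b ∧ dist a b ≤ 1

/-- The edge `(a,b)` belongs to the neighborhood `N(u)`: either it is an edge `(w,x)`
with `|u,w| ≤ 1` and `|u,x| ≤ 2/√3` (in some orientation), or an edge incident to `u`
whose other endpoint is within distance `1` of `u`. -/
def NbrEdge (V : Set (EuclideanSpace ℝ (Fin 2)))
    (u a b : EuclideanSpace ℝ (Fin 2)) : Prop :=
  UnitDiskEdge V a b ∧
    ((dist u a ≤ 1 ∧ dist u b ≤ 2 / Real.sqrt 3) ∨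
     (dist u b ≤ 1 ∧ dist u a ≤ 2 / Real.sqrt 3) ∨
     a = u ∨ b = u)

/-- There is a path of at most `d` hops from `a` to `b` using only edges of `N(u)`. -/
def NbrPath (V : Set (EuclideanSpace ℝ (Fin 2)))
    (u a b : EuclideanSpace ℝ (Fin 2)) (d : ℕ) : Prop :=
  ∃ k ≤ d, ∃ f : ℕ → EuclideanSpace ℝ (Fin 2), f 0 = a ∧ f k = b ∧
    ∀ i < k, NbrEdge V u (f i) (f (i + 1))


/-! Let `p` be the crossing point. Each of the two segments has an endpoint within `1/2` of `p`,
say `u` and `w`, so `|u,w| ≤ 1`. If moreover `|u,x|² ≤ 5/4`, then `u` is the endpoint we want.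
Otherwise `|u,x| > 1`, whence `|v,w| ≤ |u,v| + |w,x| - (|u,p| + |p,x|) < 1`; and Stewart's theorem
in the triangle `x u v` gives `min(|x,u|², |x,v|²) ≤ |x,p|² + |u,v|²/4 ≤ 5/4`, so `|v,x|² ≤ 5/4`.
Since `5/4 < 4/3`, the edge `(w,x)` then lies in `N(v)` and is reached from `v` through `w`. -/

section Geometry

variable {E P : Type*} [NormedAddCommGroup E] [InnerProductSpace ℝ E] [MetricSpace P]
  [NormedAddTorsor E P]

theorem min_dist_sq_le_of_wbtw {u p v : P} (h : Wbtw ℝ u p v) (x : P) :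
    min (dist x u ^ 2) (dist x v ^ 2) ≤ dist x p ^ 2 + dist u v ^ 2 / 4 := by
  have hsum := h.dist_add_dist
  by_cases hpu : p = u
  · subst hpu
    exact (min_le_left _ _).trans (le_add_of_nonneg_right (by positivity))
  by_cases hpv : p = v
  · subst hpv
    exact (min_le_right _ _).trans (le_add_of_nonneg_right (by positivity))
  have hstewart := EuclideanGeometry.dist_sq_mul_dist_add_dist_sq_mul_dist x u v p
    (Sbtw.angle₁₂₃_eq_pi ⟨h, hpu, hpv⟩)
  have hup : 0 < dist u p := dist_pos.2 (Ne.symm hpu)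
  have hvp : 0 < dist v p := dist_pos.2 (Ne.symm hpv)
  rw [dist_comm p v] at hsum
  set m := min (dist x u ^ 2) (dist x v ^ 2)
  have hmin : m * (dist u p + dist v p) ≤ dist u v * (dist x p ^ 2 + dist u p * dist v p) := by
    rw [← hstewart, mul_add, add_comm]
    gcongr
    · exact min_le_left _ _
    · exact min_le_right _ _
  rw [← hsum] at hmin
  have hm : m ≤ dist x p ^ 2 + dist u p * dist v p := le_of_mul_le_mul_left
    (by linarith) (by linarith : 0 < dist u p + dist v p)
  rw [← hsum]
  nlinarith [sq_nonneg (dist u p - dist v p)]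

theorem endpoint_close_to_crossing_segment_of_near {u v w x p : P} (hp : Wbtw ℝ u p v)
    (hq : Wbtw ℝ w p x) (huv : dist u v ≤ 1) (hwx : dist w x ≤ 1) (hu : dist u p ≤ 1 / 2)
    (hw : dist w p ≤ 1 / 2) :
    (dist u w ≤ 1 ∧ dist u x ^ 2 ≤ 5 / 4) ∨ (dist v w ≤ 1 ∧ dist v x ^ 2 ≤ 5 / 4) := by
  have huvp := hp.dist_add_dist
  have hwxp := hq.dist_add_dist
  by_cases hux : dist u x ^ 2 ≤ 5 / 4
  · left
    refine ⟨?_, hux⟩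
    linarith [dist_triangle u p w, dist_comm w p]
  · right
    have hux1 : 1 < dist u x := by nlinarith [dist_nonneg (x := u) (y := x)]
    refine ⟨?_, ?_⟩
    · linarith [dist_triangle v p w, dist_triangle u p x, dist_comm v p, dist_comm w p,
        dist_nonneg (x := p) (y := x)]
    · have hxp : dist x p ^ 2 ≤ 1 := by
        rw [dist_comm]
        nlinarith [dist_nonneg (x := w) (y := p), dist_nonneg (x := p) (y := x)]
      have huv2 : dist u v ^ 2 ≤ 1 := by nlinarith [dist_nonneg (x := u) (y := v)]
      have hmin : min (dist x u ^ 2) (dist x v ^ 2) ≤ 5 / 4 := by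
        linarith [min_dist_sq_le_of_wbtw hp x]
      rcases min_le_iff.1 hmin with h | h
      · exact absurd (dist_comm u x ▸ h) hux
      · rwa [dist_comm]

theorem endpoint_close_to_crossing_segment {u v w x p : P} (hp : Wbtw ℝ u p v)
    (hq : Wbtw ℝ w p x) (huv : dist u v ≤ 1) (hwx : dist w x ≤ 1) :
    ((dist u w ≤ 1 ∧ dist u x ^ 2 ≤ 5 / 4) ∨ (dist u x ≤ 1 ∧ dist u w ^ 2 ≤ 5 / 4)) ∨
      ((dist v w ≤ 1 ∧ dist v x ^ 2 ≤ 5 / 4) ∨ (dist v x ≤ 1 ∧ dist v w ^ 2 ≤ 5 / 4)) := by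
  have hnear {a b : P} (h : Wbtw ℝ a p b) (hab : dist a b ≤ 1) :
      dist a p ≤ 1 / 2 ∨ dist b p ≤ 1 / 2 := by
    by_contra! hfar
    linarith [h.dist_add_dist, dist_comm p b]
  have hvu : dist v u ≤ 1 := dist_comm u v ▸ huv
  have hxw : dist x w ≤ 1 := dist_comm w x ▸ hwx
  rcases hnear hp huv with hu | hv <;> rcases hnear hq hwx with hw | hx
  · have := endpoint_close_to_crossing_segment_of_near hp hq huv hwx hu hw
    tauto
  · have := endpoint_close_to_crossing_segment_of_near hp hq.symm huv hxw hu hx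
    tauto
  · have := endpoint_close_to_crossing_segment_of_near hp.symm hq hvu hwx hv hw
    tauto
  · have := endpoint_close_to_crossing_segment_of_near hp.symm hq.symm hvu hxw hv hx
    tauto

end Geometry

theorem le_two_div_sqrt_three {r : ℝ} (h : r ^ 2 ≤ 4 / 3) : r ≤ 2 / Real.sqrt 3 := by
  have hsqrt : Real.sqrt (4 / 3) = 2 / Real.sqrt 3 := by
    rw [Real.sqrt_div (by norm_num), show (4 : ℝ) = 2 ^ 2 by norm_num, Real.sqrt_sq zero_le_two]
  exact hsqrt ▸ (le_abs_self r).trans (Real.abs_le_sqrt h)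

section Neighborhood

variable {V : Set (EuclideanSpace ℝ (Fin 2))} {u a b c : EuclideanSpace ℝ (Fin 2)}

theorem UnitDiskEdge.symm (h : UnitDiskEdge V a b) : UnitDiskEdge V b a :=
  ⟨h.2.1, h.1, h.2.2.1.symm, dist_comm a b ▸ h.2.2.2⟩

theorem NbrEdge.symm (h : NbrEdge V u a b) : NbrEdge V u b a :=
  ⟨h.1.symm, by have := h.2; tauto⟩

theorem nbrEdge_self_left (hu : u ∈ V) (hb : b ∈ V) (hub : u ≠ b) (h : dist u b ≤ 1) :
    NbrEdge V u u b :=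
  ⟨⟨hu, hb, hub, h⟩, Or.inr (Or.inr (Or.inl rfl))⟩

theorem nbrPath_refl (a : EuclideanSpace ℝ (Fin 2)) (d : ℕ) : NbrPath V u a a d :=
  ⟨0, Nat.zero_le d, fun _ => a, rfl, rfl, fun _ h => absurd h (Nat.not_lt_zero _)⟩

theorem NbrEdge.nbrPath {d : ℕ} (h : NbrEdge V u a b) (hd : 1 ≤ d) : NbrPath V u a b d := by
  refine ⟨1, hd, fun i => if i = 0 then a else b, rfl, rfl, fun i hi => ?_⟩
  obtain rfl : i = 0 := Nat.lt_one_iff.1 hi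
  exact h

theorem NbrEdge.nbrPath_two (hab : NbrEdge V u a b) (hbc : NbrEdge V u b c) :
    NbrPath V u a c 2 := by
  refine ⟨2, le_rfl, fun i => if i = 0 then a else if i = 1 then b else c, rfl, rfl,
    fun i hi => ?_⟩
  interval_cases i
  · exact hab
  · exact hbc

theorem NbrEdge.nbrPath_two_of_dist_le_one (hu : u ∈ V) (h : dist u a ≤ 1)
    (hab : NbrEdge V u a b) : NbrPath V u u a 2 ∧ NbrPath V u u b 2 := by
  by_cases hua : u = a
  · subst hua
    exact ⟨nbrPath_refl u 2, hab.nbrPath one_le_two⟩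
  · have hspoke := nbrEdge_self_left hu hab.1.1 hua h
    exact ⟨hspoke.nbrPath one_le_two, hspoke.nbrPath_two hab⟩

theorem nbrEdge_and_nbrPath_of_dist_le (hu : u ∈ V) (hab : UnitDiskEdge V a b)
    (h : (dist u a ≤ 1 ∧ dist u b ≤ 2 / Real.sqrt 3) ∨
      (dist u b ≤ 1 ∧ dist u a ≤ 2 / Real.sqrt 3)) :
    NbrEdge V u a b ∧ NbrPath V u u a 2 ∧ NbrPath V u u b 2 := by
  have he : NbrEdge V u a b := ⟨hab, by tauto⟩
  rcases h with ⟨ha, -⟩ | ⟨hb, -⟩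
  · exact ⟨he, he.nbrPath_two_of_dist_le_one hu ha⟩
  · exact ⟨he, (he.symm.nbrPath_two_of_dist_le_one hu hb).symm⟩

end Neighborhood

theorem stmt_8 (V : Set (EuclideanSpace ℝ (Fin 2)))
    (u v w x : EuclideanSpace ℝ (Fin 2))
    (huv : UnitDiskEdge V u v) (hwx : UnitDiskEdge V w x)
    (hint : (segment ℝ u v ∩ segment ℝ w x).Nonempty) :
    (NbrEdge V u w x ∧ NbrPath V u u w 2 ∧ NbrPath V u u x 2) ∨
    (NbrEdge V v w x ∧ NbrPath V v v w 2 ∧ NbrPath V v v x 2) := by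
  obtain ⟨p, hpuv, hpwx⟩ := hint
  have hupgrade {a b c : EuclideanSpace ℝ (Fin 2)} :
      dist a b ≤ 1 ∧ dist a c ^ 2 ≤ 5 / 4 → dist a b ≤ 1 ∧ dist a c ≤ 2 / Real.sqrt 3 :=
    And.imp_right fun h => le_two_div_sqrt_three (by linarith)
  have hp : Wbtw ℝ u p v := mem_segment_iff_wbtw.1 hpuv
  have hq : Wbtw ℝ w p x := mem_segment_iff_wbtw.1 hpwx
  rcases endpoint_close_to_crossing_segment hp hq huv.2.2.2 hwx.2.2.2 with hu | hv
  · exact Or.inl (nbrEdge_and_nbrPath_of_dist_le huv.1 hwx (hu.imp hupgrade hupgrade))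
  · exact Or.inr (nbrEdge_and_nbrPath_of_dist_le huv.2.1 hwx (hv.imp hupgrade hupgrade))
end

section
/- Let u, v, w, x be points in ℝ² such that segments [u,v] and [w,x] intersect, |u,v| ≤ 1, |w,x| ≤ 1, |u,x| > 1, |v,x| > 1, and |u,x| ≤ |v,x|. Then |u,x| ≤ 2/√3. -/
/-!
Let `p = u + t • (v - u)` be a common point of the two segments, so `|p, x| ≤ |w, x| ≤ 1`.
Expanding, `|u, x|² - |p, x|² = 2t⟪x - u, v - u⟫ - t²|u, v|²`, while `|u, x| ≤ |v, x|` says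
`2⟪x - u, v - u⟫ ≤ |u, v|²`; so the difference is at most `t(1 - t)|u, v|² ≤ |u, v|² / 4`.
Hence `|u, x|² ≤ 1 + 1/4 < 4/3`.
-/

theorem norm_sq_le_norm_sub_smul_sq_add {E : Type*} [NormedAddCommGroup E]
    [InnerProductSpace ℝ E] {a d : E} {t : ℝ} (ht : 0 ≤ t) (h : ‖a‖ ≤ ‖a - d‖) :
    ‖a‖ ^ 2 ≤ ‖a - t • d‖ ^ 2 + ‖d‖ ^ 2 / 4 := by
  have hsq := pow_le_pow_left₀ (norm_nonneg a) h 2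
  rw [norm_sub_sq_real] at hsq
  rw [norm_sub_sq_real, inner_smul_right, norm_smul, mul_pow, Real.norm_eq_abs, sq_abs]
  nlinarith [mul_le_mul_of_nonneg_left hsq ht, mul_nonneg (sq_nonneg ‖d‖) (sq_nonneg (t - 1 / 2))]

theorem dist_sq_le_dist_sq_add_of_mem_segment {E : Type*} [NormedAddCommGroup E]
    [InnerProductSpace ℝ E] {u v p x : E} (hp : p ∈ segment ℝ u v)
    (hcloser : dist u x ≤ dist v x) :
    dist u x ^ 2 ≤ dist p x ^ 2 + dist u v ^ 2 / 4 := by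
  obtain ⟨t, ⟨ht, -⟩, rfl⟩ := (segment_eq_image' ℝ u v).subset hp
  simp only [dist_comm _ x, dist_comm u v, dist_eq_norm] at hcloser ⊢
  rw [← sub_sub_sub_cancel_right x v u] at hcloser
  rw [← sub_sub]
  exact norm_sq_le_norm_sub_smul_sq_add ht hcloser

theorem stmt_13_general (u v w x : EuclideanSpace ℝ (Fin 2))
    (hint : (segment ℝ u v ∩ segment ℝ w x).Nonempty)
    (huv : dist u v ≤ 1) (hwx : dist w x ≤ 1)
    (hcloser : dist u x ≤ dist v x) :
    dist u x ≤ 2 / Real.sqrt 3 := by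
  obtain ⟨p, hpuv, hpwx⟩ := hint
  have hpx : dist p x ≤ 1 := by
    linarith [dist_add_dist_of_mem_segment hpwx, dist_nonneg (x := w) (y := p)]
  have hux : dist u x ^ 2 ≤ (2 / Real.sqrt 3) ^ 2 := by
    rw [div_pow, Real.sq_sqrt (by norm_num)]
    nlinarith [dist_sq_le_dist_sq_add_of_mem_segment hpuv hcloser, dist_nonneg (x := p) (y := x),
      dist_nonneg (x := u) (y := v)]
  exact (pow_le_pow_iff_left₀ dist_nonneg (by positivity) two_ne_zero).mp hux

theorem stmt_13 (u v w x : EuclideanSpace ℝ (Fin 2))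
    (hint : (segment ℝ u v ∩ segment ℝ w x).Nonempty)
    (huv : dist u v ≤ 1) (hwx : dist w x ≤ 1)
    (hux : 1 < dist u x) (hvx : 1 < dist v x)
    (hcloser : dist u x ≤ dist v x) :
    dist u x ≤ 2 / Real.sqrt 3 :=
  stmt_13_general u v w x hint huv hwx hcloser
end
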